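/- (Subdifferential of the anisotropy functional, nonsmooth case.) Let Ω ⊂ ℝ² be a measurable set of finite Lebesgue measure, and let γ : ℝ² → [0, ∞) be convex and Lipschitz continuous. Define Φ(w) := ∫_Ω γ(w(x)) dx for w ∈ L²(Ω; ℝ²) (finite, by the linear growth of γ). Then for w, v ∈ L²(Ω; ℝ²), the subgradient inequality ∫_Ω v(x) · (u(x) − w(x)) dx ≤ Φ(u) − Φ(w) for all u ∈ L²(Ω; ℝ²) holds if and only if for a.e. x ∈ Ω one has v(x) · (z − w(x)) ≤ γ(z) − γ(w(x)) for every z ∈ ℝ² (i.e. v(x) ∈ ∂γ(w(x)) a.e. in Ω). -/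

import Mathlib

open Real MeasureTheory RealInnerProductSpace NNReal

noncomputable abbrev E2 : Type := EuclideanSpace ℝ (Fin 2)

/-
Testing the subgradient inequality with `u` equal to a constant `z` on a measurable set `s` and
to `w` off `s` gives `∫ x in s, ⟪v x, z - w x⟫ ≤ ∫ x in s, γ z - γ (w x)` for every `s`, hence
the pointwise inequality almost everywhere, for each fixed `z`. Both sides are continuous in `z`,
so it suffices to take `z` in a countable dense set, which makes the exceptional null set
independent of `z`. The converse is integration of the pointwise inequality; Lipschitz continuity
of `γ` and finiteness of the measure make every integral finite.
-/

theorem MeasureTheory.setIntegral_eq_integral_apply_piecewise {α β G : Type*}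
    [MeasurableSpace α] {μ : Measure α} [NormedAddCommGroup G] [NormedSpace ℝ G] {s : Set α}
    [DecidablePred (· ∈ s)] (hs : MeasurableSet s) (φ : α → β → G) {f g : α → β} (hφ : ∀ x, φ x (g x) = 0) :
    ∫ x in s, φ x (f x) ∂μ = ∫ x, φ x (s.piecewise f g x) ∂μ := by
  rw [← integral_indicator hs]
  congr 1 with x
  by_cases hx : x ∈ s <;> simp [hx, hφ]

theorem MeasureTheory.ae_forall_of_forall_ae {α X : Type*} [MeasurableSpace α] {μ : Measure α}
    [TopologicalSpace X] [TopologicalSpace.SeparableSpace X] {P : α → X → Prop}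
    (hP : ∀ x, IsClosed {z | P x z}) (h : ∀ z, ∀ᵐ x ∂μ, P x z) :
    ∀ᵐ x ∂μ, ∀ z, P x z := by
  obtain ⟨D, hDc, hDd⟩ := TopologicalSpace.exists_countable_dense X
  filter_upwards [(ae_ball_iff hDc).2 fun z _ => h z] with x hx
  exact hDd.induction hx (hP x)

section
variable {α E : Type*} [MeasurableSpace α] {μ : Measure α} [NormedAddCommGroup E]

theorem LipschitzWith.memLp_comp_of_isFiniteMeasure [IsFiniteMeasure μ] {F : Type*}
    [NormedAddCommGroup F] {K : ℝ≥0} {g : E → F} (hg : LipschitzWith K g) {p : ENNReal}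
    {f : α → E} (hf : MemLp f p μ) :
    MemLp (fun x => g (f x)) p μ := by
  have hg0 : LipschitzWith K (fun y => g y - g 0) := by
    simpa using hg.sub (LipschitzWith.const (g 0))
  convert (hg0.comp_memLp (sub_self _) hf).add (memLp_const (g 0)) using 1
  ext x
  simp

variable [InnerProductSpace ℝ E]

theorem MeasureTheory.MemLp.integrable_inner {f g : α → E} (hf : MemLp f 2 μ)
    (hg : MemLp g 2 μ) : Integrable (fun x => ⟪f x, g x⟫) μ := by
  refine (L2.integrable_inner (𝕜 := ℝ) (hf.toLp f) (hg.toLp g)).congr ?_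
  filter_upwards [hf.coeFn_toLp, hg.coeFn_toLp] with x hfx hgx
  rw [hfx, hgx]

variable [IsFiniteMeasure μ] {γ : E → ℝ} {L : ℝ≥0} {w v : α → E}

theorem ae_inner_sub_le_of_forall_integral_inner_sub_le (hγ : LipschitzWith L γ)
    (hw : MemLp w 2 μ) (hv : MemLp v 2 μ)
    (h : ∀ u, MemLp u 2 μ → ∫ x, ⟪v x, u x - w x⟫ ∂μ ≤ (∫ x, γ (u x) ∂μ) - ∫ x, γ (w x) ∂μ)
    (z : E) : ∀ᵐ x ∂μ, ⟪v x, z - w x⟫ ≤ γ z - γ (w x) := by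
  classical
  have hzw : MemLp (fun x => z - w x) 2 μ := (memLp_const z).sub hw
  have hγw := (hγ.memLp_comp_of_isFiniteMeasure hw).integrable one_le_two
  refine ae_le_of_forall_setIntegral_le (hv.integrable_inner hzw)
    ((integrable_const (γ z)).sub hγw) fun s hs _ => ?_
  let u := s.piecewise (fun _ => z) w
  have hu : MemLp u 2 μ := MemLp.piecewise hs (memLp_const z) (hw.restrict _)
  calc ∫ x in s, ⟪v x, z - w x⟫ ∂μ = ∫ x, ⟪v x, u x - w x⟫ ∂μ :=
        setIntegral_eq_integral_apply_piecewise hs (fun x y => ⟪v x, y - w x⟫) (by simp)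
    _ ≤ (∫ x, γ (u x) ∂μ) - ∫ x, γ (w x) ∂μ := h u hu
    _ = ∫ x in s, (γ z - γ (w x)) ∂μ := by
        rw [← integral_sub ((hγ.memLp_comp_of_isFiniteMeasure hu).integrable one_le_two) hγw]
        exact (setIntegral_eq_integral_apply_piecewise hs (fun x y => γ y - γ (w x))
          (by simp)).symm

theorem forall_integral_inner_sub_le_iff_ae_inner_sub_le [TopologicalSpace.SeparableSpace E]
    (hγ : LipschitzWith L γ) (hw : MemLp w 2 μ) (hv : MemLp v 2 μ) :
    (∀ u, MemLp u 2 μ → ∫ x, ⟪v x, u x - w x⟫ ∂μ ≤ (∫ x, γ (u x) ∂μ) - ∫ x, γ (w x) ∂μ) ↔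
      ∀ᵐ x ∂μ, ∀ z, ⟪v x, z - w x⟫ ≤ γ z - γ (w x) := by
  have hγint {f : α → E} (hf : MemLp f 2 μ) :=
    (hγ.memLp_comp_of_isFiniteMeasure hf).integrable one_le_two
  refine ⟨fun h => ae_forall_of_forall_ae (fun x => isClosed_le (by fun_prop)
      (hγ.continuous.sub continuous_const))
    (ae_inner_sub_le_of_forall_integral_inner_sub_le hγ hw hv h), fun h u hu => ?_⟩
  rw [← integral_sub (hγint hu) (hγint hw)]
  exact integral_mono_ae (hv.integrable_inner (hu.sub hw)) ((hγint hu).sub (hγint hw))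
    (h.mono fun x hx => hx (u x))

end

theorem stmt16_general (Ω : Set E2) (hΩfin : volume Ω ≠ ⊤)
    (γ : E2 → ℝ) (L : ℝ≥0)
    (hγ_lip : LipschitzWith L γ)
    (w v : E2 → E2)
    (hw : MemLp w 2 (volume.restrict Ω)) (hv : MemLp v 2 (volume.restrict Ω)) :
    (∀ u : E2 → E2, MemLp u 2 (volume.restrict Ω) →
        ∫ x in Ω, ⟪v x, u x - w x⟫ ≤ (∫ x in Ω, γ (u x)) - ∫ x in Ω, γ (w x))
      ↔ ∀ᵐ x ∂volume.restrict Ω, ∀ z : E2, ⟪v x, z - w x⟫ ≤ γ z - γ (w x) := by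
  have : IsFiniteMeasure (volume.restrict Ω) := isFiniteMeasure_restrict.2 hΩfin
  exact forall_integral_inner_sub_le_iff_ae_inner_sub_le hγ_lip hw hv

theorem stmt16 (Ω : Set E2) (hΩ : MeasurableSet Ω) (hΩfin : volume Ω ≠ ⊤)
    (γ : E2 → ℝ) (L : ℝ≥0)
    (hγ_nonneg : ∀ x, 0 ≤ γ x) (hγ_conv : ConvexOn ℝ Set.univ γ)
    (hγ_lip : LipschitzWith L γ)
    (w v : E2 → E2)
    (hw : MemLp w 2 (volume.restrict Ω)) (hv : MemLp v 2 (volume.restrict Ω)) :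
    (∀ u : E2 → E2, MemLp u 2 (volume.restrict Ω) →
        ∫ x in Ω, ⟪v x, u x - w x⟫ ≤ (∫ x in Ω, γ (u x)) - ∫ x in Ω, γ (w x))
      ↔ ∀ᵐ x ∂volume.restrict Ω, ∀ z : E2, ⟪v x, z - w x⟫ ≤ γ z - γ (w x) :=
  stmt16_general Ω hΩfin γ L hγ_lip w v hw hv
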